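/- The Minkowski sum of trapezoids satisfies T^{k_1}_{[m_1,n_1]} + T^{k_2}_{[m_2,n_2]} = T^{k_1+k_2}_{[m_1+m_2, n_1+n_2]}, where the sum of two sets of pairs is the set of coordinatewise sums. More generally, for any finite family, the Minkowski sum of T^{k_i}_{[m_i,n_i]} for i = 1,…,p equals T^{Σk_i}_{[Σm_i, Σn_i]}, provided each m_i ≥ 2k_i and n_i ≥ m_i. -/

import Mathlib

open Matrix Finset Pointwise

noncomputable def posCount {n : Type*} [Fintype n] [DecidableEq n]
    {A : Matrix n n ℝ} (hA : A.IsHermitian) : ℕ :=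
  Nat.card {i // 0 < hA.eigenvalues i}

noncomputable def negCount {n : Type*} [Fintype n] [DecidableEq n]
    {A : Matrix n n ℝ} (hA : A.IsHermitian) : ℕ :=
  Nat.card {i // hA.eigenvalues i < 0}

noncomputable def zeroCount {n : Type*} [Fintype n] [DecidableEq n]
    {A : Matrix n n ℝ} (hA : A.IsHermitian) : ℕ :=
  Nat.card {i // hA.eigenvalues i = 0}

def inS {V : Type*} [Fintype V] [DecidableEq V] (G : SimpleGraph V) (A : Matrix V V ℝ) : Prop :=
  A.IsHermitian ∧ ∀ i j : V, i ≠ j → (A i j ≠ 0 ↔ G.Adj i j)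

noncomputable def inertiaSet {V : Type*} [Fintype V] [DecidableEq V] (G : SimpleGraph V) :
    Set (ℕ × ℕ) :=
  {pq | ∃ A : Matrix V V ℝ, ∃ hA : A.IsHermitian, inS G A ∧ pq = (posCount hA, negCount hA)}

def T (k m n : ℕ) : Set (ℕ × ℕ) :=
  {pq | k ≤ pq.1 ∧ k ≤ pq.2 ∧ m ≤ pq.1 + pq.2 ∧ pq.1 + pq.2 ≤ n}

lemma T_zero : T 0 0 0 = 0 := by
  ext ⟨p, q⟩
  simp only [T, Set.mem_ofPred_eq, Set.mem_zero, Prod.mk_eq_zero]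
  omega

lemma add_subset_T (k₁ m₁ n₁ k₂ m₂ n₂ : ℕ) :
    T k₁ m₁ n₁ + T k₂ m₂ n₂ ⊆ T (k₁ + k₂) (m₁ + m₂) (n₁ + n₂) := by
  rintro _ ⟨⟨p₁, q₁⟩, ⟨hp₁, hq₁, hm₁, hn₁⟩, ⟨p₂, q₂⟩, ⟨hp₂, hq₂, hm₂, hn₂⟩, rfl⟩
  refine ⟨?_, ?_, ?_, ?_⟩ <;> dsimp only [Prod.fst_add, Prod.snd_add] <;> omega

lemma T_subset_add {k₁ m₁ n₁ k₂ m₂ n₂ : ℕ}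
    (hk₁ : 2 * k₁ ≤ m₁) (hmn₁ : m₁ ≤ n₁) (hk₂ : 2 * k₂ ≤ m₂) (hmn₂ : m₂ ≤ n₂) :
    T (k₁ + k₂) (m₁ + m₂) (n₁ + n₂) ⊆ T k₁ m₁ n₁ + T k₂ m₂ n₂ := by
  rintro ⟨p, q⟩ ⟨hp, hq, hm, hn⟩
  -- Give the first summand the total `s ∈ [m₁, n₁]`, leaving `p + q - s ∈ [m₂, n₂]`;
  -- then take its first coordinate as small as `k₁ ≤ p₁` and `k₂ ≤ q - (s - p₁)` allow.
  set s := max m₁ (p + q - n₂)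
  set p₁ := max k₁ (s + k₂ - q)
  refine ⟨(p₁, s - p₁), ⟨?_, ?_, ?_, ?_⟩, (p - p₁, q - (s - p₁)), ⟨?_, ?_, ?_, ?_⟩, ?_⟩
  all_goals dsimp only
  any_goals omega
  ext <;> dsimp only [Prod.fst_add, Prod.snd_add] <;> omega

lemma T_add (k₁ m₁ n₁ k₂ m₂ n₂ : ℕ)
    (hk₁ : 2 * k₁ ≤ m₁) (hmn₁ : m₁ ≤ n₁) (hk₂ : 2 * k₂ ≤ m₂) (hmn₂ : m₂ ≤ n₂) :
    T k₁ m₁ n₁ + T k₂ m₂ n₂ = T (k₁ + k₂) (m₁ + m₂) (n₁ + n₂) :=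
  (add_subset_T _ _ _ _ _ _).antisymm (T_subset_add hk₁ hmn₁ hk₂ hmn₂)

lemma sum_T {ι : Type*} (s : Finset ι) (k m n : ι → ℕ)
    (hk : ∀ i ∈ s, 2 * k i ≤ m i) (hmn : ∀ i ∈ s, m i ≤ n i) :
    ∑ i ∈ s, T (k i) (m i) (n i) = T (∑ i ∈ s, k i) (∑ i ∈ s, m i) (∑ i ∈ s, n i) := by
  classical
  induction s using Finset.induction_on with
  | empty => simp only [sum_empty, T_zero]
  | insert a s ha ih =>
    simp only [forall_mem_insert] at hk hmn
    rw [sum_insert ha, sum_insert ha, sum_insert ha, sum_insert ha, ih hk.2 hmn.2]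
    refine T_add _ _ _ _ _ _ hk.1 hmn.1 ?_ (sum_le_sum hmn.2)
    rw [mul_sum]
    exact sum_le_sum hk.2

theorem stmt_9 :
    (∀ k₁ m₁ n₁ k₂ m₂ n₂ : ℕ,
      2 * k₁ ≤ m₁ → m₁ ≤ n₁ → 2 * k₂ ≤ m₂ → m₂ ≤ n₂ →
      T k₁ m₁ n₁ + T k₂ m₂ n₂ = T (k₁ + k₂) (m₁ + m₂) (n₁ + n₂)) ∧
    (∀ (p : ℕ) (k m n : Fin p → ℕ),
      (∀ i, 2 * k i ≤ m i) → (∀ i, m i ≤ n i) →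
      ∑ i, T (k i) (m i) (n i) = T (∑ i, k i) (∑ i, m i) (∑ i, n i)) :=
  ⟨T_add, fun _ k m n hk hmn => sum_T univ k m n (fun i _ => hk i) (fun i _ => hmn i)⟩
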